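/- arXiv:1903.09986 — 2 statements merged into one kernel-verified Lean document; each statement's English description precedes it below -/
import Mathlib

section
/- For the cycle graph C_n on n ≥ 3 vertices, the Hosoya index equals the Lucas number L_n, where L_0 = 2, L_1 = 1, and L_n = L_{n-1} + L_{n-2}. -/
/-!
Choosing the edge `{v, v + 1}` of `C_n` is recorded by choosing the vertex `v`, so matchings of
`C_n` are the subsets of `ℤ/n` with no two cyclically consecutive elements. Unrolling the cycle
at `0`: such sets avoiding `0` are the sets without consecutive elements in `{1, …, n - 1}`, and
those containing `0` are `{0}` together with such a set in `{2, …, n - 2}`. Sets without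
consecutive elements in an interval of length `k` are counted by `F_{k+2}` (split on the smallest
element), so `Z(C_n) = F_{n+1} + F_{n-1} = L_n`.
-/

/-- The Hosoya index of a graph: the number of matchings (sets of pairwise
vertex-disjoint edges), including the empty matching. -/
noncomputable def hosoya {V : Type*} (G : SimpleGraph V) : ℕ :=
  Set.ncard {s : Finset (Sym2 V) | (↑s : Set (Sym2 V)) ⊆ G.edgeSet ∧
    (↑s : Set (Sym2 V)).Pairwise (fun e f => ∀ v : V, ¬(v ∈ e ∧ v ∈ f))}

open Finset SimpleGraph

section NoConsecutive

variable {α : Type*} [Add α] [One α]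

/-- On `Fin n` the successor `a + 1` wraps around, so there this is the cyclic notion. -/
def NoConsecutive (s : Finset α) : Prop := ∀ a ∈ s, a + 1 ∉ s

instance [DecidableEq α] : DecidablePred (NoConsecutive (α := α)) :=
  fun s => inferInstanceAs (Decidable (∀ a ∈ s, a + 1 ∉ s))

theorem NoConsecutive.mono {s t : Finset α} (hst : s ⊆ t) (ht : NoConsecutive t) :
    NoConsecutive s :=
  fun a ha ha' => ht a (hst ha) (hst ha')

variable [DecidableEq α]

def noConsecutiveSubsets (X : Finset α) : Finset (Finset α) :=
  {s ∈ X.powerset | NoConsecutive s}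

@[simp]
theorem mem_noConsecutiveSubsets {X s : Finset α} :
    s ∈ noConsecutiveSubsets X ↔ s ⊆ X ∧ NoConsecutive s := by
  simp [noConsecutiveSubsets]

@[simp]
theorem noConsecutiveSubsets_empty : noConsecutiveSubsets (∅ : Finset α) = {∅} := by
  ext s
  simp +contextual [NoConsecutive]

end NoConsecutive

theorem filter_notMem_noConsecutiveSubsets_Ico (a b : ℕ) :
    {s ∈ noConsecutiveSubsets (Ico a b) | a ∉ s} = noConsecutiveSubsets (Ico (a + 1) b) := by
  ext s
  simp only [mem_filter, mem_noConsecutiveSubsets]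
  constructor
  · rintro ⟨⟨hsX, hs⟩, ha⟩
    refine ⟨fun x hx => ?_, hs⟩
    have := mem_Ico.1 (hsX hx)
    exact mem_Ico.2 ⟨Nat.lt_of_le_of_ne this.1 (by rintro rfl; exact ha hx), this.2⟩
  · rintro ⟨hsX, hs⟩
    exact ⟨⟨hsX.trans (Ico_subset_Ico_left a.le_succ), hs⟩, fun ha => by simpa using hsX ha⟩

theorem card_filter_mem_noConsecutiveSubsets_Ico {a b : ℕ} (hab : a < b) :
    #{s ∈ noConsecutiveSubsets (Ico a b) | a ∈ s} = #(noConsecutiveSubsets (Ico (a + 2) b)) := by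
  refine card_nbij' (·.erase a) (insert a) ?_ ?_ ?_ ?_
  · intro s hs
    obtain ⟨⟨hsX, hs⟩, ha⟩ := by simpa using hs
    refine mem_noConsecutiveSubsets.2 ⟨fun x hx => ?_, hs.mono (erase_subset a s)⟩
    obtain ⟨hxa, hx⟩ := mem_erase.1 hx
    have hxX := mem_Ico.1 (hsX hx)
    have : x ≠ a + 1 := by rintro rfl; exact hs a ha hx
    exact mem_Ico.2 ⟨by omega, hxX.2⟩
  · intro s hs
    obtain ⟨hsX, hs⟩ := mem_noConsecutiveSubsets.1 hs
    have hle : ∀ x ∈ s, a + 2 ≤ x := fun x hx => (mem_Ico.1 (hsX hx)).1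
    simp only [coe_filter, mem_noConsecutiveSubsets, Set.mem_ofPred_eq, mem_insert_self, and_true]
    refine ⟨insert_subset (mem_Ico.2 ⟨le_rfl, hab⟩) (hsX.trans (Ico_subset_Ico_left (by omega))),
      ?_⟩
    intro x hx hx'
    rw [mem_insert] at hx hx'
    rcases hx with rfl | hx <;> rcases hx' with h | h
    · omega
    · exact absurd (hle _ h) (by omega)
    · exact absurd (hle _ hx) (by omega)
    · exact hs x hx h
  · intro s hs
    exact insert_erase (mem_filter.1 hs).2
  · intro s hs
    exact erase_insert fun ha => by simpa using (mem_noConsecutiveSubsets.1 hs).1 ha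

theorem card_noConsecutiveSubsets_Ico_eq_add {a b : ℕ} (hab : a < b) :
    #(noConsecutiveSubsets (Ico a b)) =
      #(noConsecutiveSubsets (Ico (a + 1) b)) + #(noConsecutiveSubsets (Ico (a + 2) b)) := by
  rw [← filter_notMem_noConsecutiveSubsets_Ico, ← card_filter_mem_noConsecutiveSubsets_Ico hab,
    add_comm, card_filter_add_card_filter_not]

theorem card_noConsecutiveSubsets_Ico : ∀ k a : ℕ,
    #(noConsecutiveSubsets (Ico a (a + k))) = Nat.fib (k + 2)
  | 0, a => by simp
  | 1, a => by
    rw [card_noConsecutiveSubsets_Ico_eq_add (by omega)]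
    simp [Nat.fib_add_two]
  | k + 2, a => by
    rw [card_noConsecutiveSubsets_Ico_eq_add (by omega), Nat.fib_add_two, add_comm (Nat.fib _),
      show a + (k + 2) = a + 1 + (k + 1) by omega, card_noConsecutiveSubsets_Ico (k + 1),
      show a + 1 + (k + 1) = a + 2 + k by omega, card_noConsecutiveSubsets_Ico k]

theorem noConsecutive_map_valEmbedding_iff {n : ℕ} (t : Finset (Fin (n + 1))) :
    NoConsecutive (t.map Fin.valEmbedding) ∧
        ¬(0 ∈ t.map Fin.valEmbedding ∧ n ∈ t.map Fin.valEmbedding) ↔ NoConsecutive t := by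
  simp only [NoConsecutive, mem_map, Fin.valEmbedding_apply, forall_exists_index, and_imp,
    forall_apply_eq_imp_iff₂, not_exists, not_and]
  constructor
  · rintro ⟨hs, hwrap⟩ v hv hv'
    rcases eq_or_ne v (Fin.last n) with rfl | hlast
    · exact hwrap (Fin.last n + 1) hv' (by simp) (Fin.last n) hv rfl
    · exact hs v hv (v + 1) hv' (by simp [Fin.val_add_one, hlast])
  · intro ht
    refine ⟨fun v hv w hw hvw => ht v hv ?_, fun w hw hw0 v hv hvn => ht v hv ?_⟩
    · have hlast : v ≠ Fin.last n := by rintro rfl; have := w.isLt; simp at hvw; omega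
      rwa [show v + 1 = w from Fin.ext (by simp [Fin.val_add_one, hlast, hvw])]
    · rwa [show v = Fin.last n from Fin.ext hvn, Fin.last_add_one, show (0 : Fin (n + 1)) = w from
        Fin.ext hw0.symm]

theorem card_noConsecutiveSubsets_fin_univ (n : ℕ) :
    #(noConsecutiveSubsets (univ : Finset (Fin (n + 1)))) =
      #{s ∈ noConsecutiveSubsets (range (n + 1)) | ¬(0 ∈ s ∧ n ∈ s)} := by
  refine card_nbij (·.map Fin.valEmbedding) ?_ (Finset.map_injective _).injOn ?_
  · intro t ht
    have hsub : t.map Fin.valEmbedding ⊆ range (n + 1) := fun x hx => by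
      obtain ⟨v, -, rfl⟩ := mem_map.1 hx
      exact mem_range.2 v.isLt
    obtain ⟨hs, hwrap⟩ := (noConsecutive_map_valEmbedding_iff t).2 (mem_noConsecutiveSubsets.1 ht).2
    simp only [coe_filter, mem_noConsecutiveSubsets]
    exact ⟨⟨hsub, hs⟩, hwrap⟩
  · intro s hs
    simp only [coe_filter, mem_noConsecutiveSubsets] at hs
    obtain ⟨⟨hsub, hs⟩, hwrap⟩ := hs
    rw [← Nat.Iio_eq_range, ← Fin.map_valEmbedding_univ, subset_map_iff] at hsub
    obtain ⟨t, -, rfl⟩ := hsub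
    exact ⟨t, mem_noConsecutiveSubsets.2
      ⟨subset_univ t, (noConsecutive_map_valEmbedding_iff t).1 ⟨hs, hwrap⟩⟩, rfl⟩

theorem card_filter_noConsecutiveSubsets_range (n : ℕ) :
    #{s ∈ noConsecutiveSubsets (range (n + 3)) | ¬(0 ∈ s ∧ n + 2 ∈ s)} =
      Nat.fib (n + 4) + Nat.fib (n + 2) := by
  have hzero_notMem : {s ∈ noConsecutiveSubsets (range (n + 3)) | ¬(0 ∈ s ∧ n + 2 ∈ s) ∧ 0 ∉ s} =
      {s ∈ noConsecutiveSubsets (Ico 0 (n + 3)) | 0 ∉ s} := by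
    ext s; simp +contextual
  have hzero_mem : {s ∈ noConsecutiveSubsets (range (n + 3)) | ¬(0 ∈ s ∧ n + 2 ∈ s) ∧ 0 ∈ s} =
      {s ∈ noConsecutiveSubsets (Ico 0 (n + 2)) | 0 ∈ s} := by
    ext s
    simp only [mem_filter, mem_noConsecutiveSubsets]
    constructor
    · rintro ⟨⟨hsX, hs⟩, hwrap, h0⟩
      refine ⟨⟨fun x hx => ?_, hs⟩, h0⟩
      have hx_ne : x ≠ n + 2 := by rintro rfl; exact hwrap ⟨h0, hx⟩
      have := mem_range.1 (hsX hx)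
      exact mem_Ico.2 ⟨x.zero_le, by omega⟩
    · rintro ⟨⟨hsX, hs⟩, h0⟩
      refine ⟨⟨fun x hx => mem_range.2 ?_, hs⟩, fun h => by simpa using hsX h.2, h0⟩
      have := mem_Ico.1 (hsX hx)
      omega
  rw [← card_filter_add_card_filter_not (fun s => 0 ∈ s), filter_filter, filter_filter,
    hzero_mem, hzero_notMem, card_filter_mem_noConsecutiveSubsets_Ico (by omega),
    filter_notMem_noConsecutiveSubsets_Ico,
    add_comm, show n + 3 = 1 + (n + 2) by omega, card_noConsecutiveSubsets_Ico,
    show Ico 2 (n + 2) = Ico 2 (2 + n) by rw [add_comm], card_noConsecutiveSubsets_Ico]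

theorem cycleGraph_edgeSet_eq_range (n : ℕ) :
    (cycleGraph (n + 2)).edgeSet = Set.range fun v : Fin (n + 2) => s(v, v + 1) := by
  ext e
  induction e using Sym2.ind with
  | _ u v =>
    simp only [mem_edgeSet, cycleGraph_adj, Set.mem_range, Sym2.eq_iff, sub_eq_iff_eq_add']
    constructor
    · rintro (h | h)
      · exact ⟨v, Or.inr ⟨rfl, h.symm⟩⟩
      · exact ⟨u, Or.inl ⟨rfl, h.symm⟩⟩
    · rintro ⟨w, ⟨rfl, rfl⟩ | ⟨rfl, rfl⟩⟩
      · exact Or.inr rfl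
      · exact Or.inl rfl

theorem injective_sym2_mk_add_one (n : ℕ) :
    Function.Injective fun v : Fin (n + 3) => s(v, v + 1) := by
  intro v w h
  rcases Sym2.eq_iff.1 h with ⟨hvw, -⟩ | ⟨rfl, hw⟩
  · exact hvw
  · have h2 : (1 + 1 : Fin (n + 3)) = 0 := by simpa [add_assoc] using hw
    simp [Fin.ext_iff, Fin.val_add, Nat.mod_eq_of_lt (show 2 < n + 3 by omega)] at h2

theorem exists_mem_sym2_mk_add_one_iff {α : Type*} [Add α] [One α] [IsRightCancelAdd α]
    {v w : α} : (∃ u, u ∈ s(v, v + 1) ∧ u ∈ s(w, w + 1)) ↔ v = w ∨ w = v + 1 ∨ v = w + 1 := by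
  simp only [Sym2.mem_iff]
  constructor
  · rintro ⟨u, rfl | rfl, h | h⟩
    · exact Or.inl h
    · exact Or.inr (Or.inr h)
    · exact Or.inr (Or.inl h.symm)
    · exact Or.inl (add_right_cancel h)
  · rintro (rfl | rfl | rfl)
    · exact ⟨v, Or.inl rfl, Or.inl rfl⟩
    · exact ⟨v + 1, Or.inr rfl, Or.inl rfl⟩
    · exact ⟨w + 1, Or.inl rfl, Or.inr rfl⟩

theorem pairwise_disjoint_image_sym2_mk_add_one_iff {n : ℕ} (t : Finset (Fin (n + 3))) :
    (↑(t.image fun v => s(v, v + 1)) : Set (Sym2 (Fin (n + 3)))).Pairwise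
      (fun e f => ∀ u, ¬(u ∈ e ∧ u ∈ f)) ↔ NoConsecutive t := by
  rw [coe_image, (injective_sym2_mk_add_one n).injOn.pairwise_image]
  have hdisjoint (v w : Fin (n + 3)) :
      (∀ u, ¬(u ∈ s(v, v + 1) ∧ u ∈ s(w, w + 1))) ↔ ¬(v = w ∨ w = v + 1 ∨ v = w + 1) :=
    not_exists.symm.trans (not_congr exists_mem_sym2_mk_add_one_iff)
  simp only [Set.Pairwise, Function.onFun, mem_coe, hdisjoint]
  constructor
  · intro h v hv hv'
    exact h hv hv' (left_ne_add.2 one_ne_zero) (Or.inr (Or.inl rfl))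
  · rintro ht v hv w hw hvw (rfl | rfl | rfl)
    · exact hvw rfl
    · exact ht v hv hw
    · exact ht w hw hv

theorem hosoya_cycleGraph_eq_card (n : ℕ) :
    hosoya (cycleGraph (n + 3)) = #(noConsecutiveSubsets (univ : Finset (Fin (n + 3)))) := by
  have hmatchings : {M : Finset (Sym2 (Fin (n + 3))) | ↑M ⊆ (cycleGraph (n + 3)).edgeSet ∧
      (↑M : Set (Sym2 (Fin (n + 3)))).Pairwise (fun e f => ∀ u, ¬(u ∈ e ∧ u ∈ f))} =
      image (fun v => s(v, v + 1)) ''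
        (noConsecutiveSubsets (univ : Finset (Fin (n + 3))) : Set (Finset (Fin (n + 3)))) := by
    ext M
    simp only [Set.mem_ofPred_eq, Set.mem_image, mem_coe, mem_noConsecutiveSubsets, subset_univ,
      true_and]
    constructor
    · rintro ⟨hsub, hpair⟩
      rw [cycleGraph_edgeSet_eq_range, ← Set.image_univ, ← coe_univ, ← coe_image, coe_subset,
        subset_image_iff] at hsub
      obtain ⟨t, -, rfl⟩ := hsub
      exact ⟨t, (pairwise_disjoint_image_sym2_mk_add_one_iff t).1 hpair, rfl⟩
    · rintro ⟨t, ht, rfl⟩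
      refine ⟨?_, (pairwise_disjoint_image_sym2_mk_add_one_iff t).2 ht⟩
      rw [coe_image, cycleGraph_edgeSet_eq_range]
      exact Set.image_subset_range _ _
  rw [hosoya, hmatchings, Set.ncard_image_of_injective _ (image_injective
    (injective_sym2_mk_add_one n)), Set.ncard_coe_finset]

theorem lucas_succ_eq_fib_add_fib {L : ℕ → ℕ} (hL0 : L 0 = 2) (hL1 : L 1 = 1)
    (hLrec : ∀ k, L (k + 2) = L (k + 1) + L k) : ∀ k, L (k + 1) = Nat.fib (k + 2) + Nat.fib k
  | 0 => by simp [hL1]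
  | 1 => by simp [hLrec, hL0, hL1, Nat.fib_add_two]
  | k + 2 => by
    rw [hLrec, lucas_succ_eq_fib_add_fib hL0 hL1 hLrec (k + 1),
      lucas_succ_eq_fib_add_fib hL0 hL1 hLrec k]
    linarith [Nat.fib_add_two (n := k + 2), Nat.fib_add_two (n := k)]

theorem hosoya_cycleGraph (n : ℕ) (hn : 3 ≤ n) (L : ℕ → ℕ)
    (hL0 : L 0 = 2) (hL1 : L 1 = 1)
    (hLrec : ∀ k, L (k + 2) = L (k + 1) + L k) :
    hosoya (SimpleGraph.cycleGraph n) = L n := by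
  obtain ⟨m, rfl⟩ := Nat.exists_eq_add_of_le' hn
  rw [hosoya_cycleGraph_eq_card, card_noConsecutiveSubsets_fin_univ,
    card_filter_noConsecutiveSubsets_range, lucas_succ_eq_fib_add_fib hL0 hL1 hLrec (m + 2)]
end

section
/- For the caterpillar graph C_n(a_0, a_1, …, a_{n-1}) with positive integers a_i, the Hosoya index equals p_{n-1}, the numerator of the simple continued fraction [a_0; a_1, …, a_{n-1}] in lowest terms, where p_k = a_k p_{k-1} + p_{k-2}, p_{-1} = 1, p_{-2} = 0. -/
/-- The caterpillar graph `C n (x 0, …, x (n-1))`: a central path of vertices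
`⟨i, 0⟩`, where the spine vertex `⟨i, 0⟩` carries `x i - 1` pendant leaves
`⟨i, j⟩`, `j ≠ 0`. -/
def caterpillar (n : ℕ) (x : Fin n → ℕ) :
    SimpleGraph ((i : Fin n) × Fin (x i)) :=
  SimpleGraph.fromRel (fun a b =>
    ((a.2 : ℕ) = 0 ∧ (b.2 : ℕ) = 0 ∧ (b.1 : ℕ) = (a.1 : ℕ) + 1) ∨
    (a.1 = b.1 ∧ (a.2 : ℕ) = 0 ∧ (b.2 : ℕ) ≠ 0))

/-!
Root the caterpillar at its first spine vertex. Every edge joins a non-root vertex to its parent,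
and the edges whose child lies over spine position `i` (its pendant edges and the spine edge from
`i - 1`) all pass through the spine vertex `i`. Hence a matching is the same as a choice of at most
one such edge for every `i`, subject only to: choosing the spine edge into `i` forbids any choice
at `i - 1`. Counting these choices by the last position, the number `A n` of all of them and the
number `F n` of those making no choice at the last position satisfy `A (n + 1) = a n * A n + F n`
and `F (n + 1) = A n`, the recurrence of the continued fraction numerators.
-/

namespace SimpleGraph

variable {V : Type*} (G : SimpleGraph V)

def IsEdgeMatching (M : Finset (Sym2 V)) : Prop :=
  (↑M : Set (Sym2 V)) ⊆ G.edgeSet ∧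
    (↑M : Set (Sym2 V)).Pairwise (fun e f => ∀ v : V, ¬(v ∈ e ∧ v ∈ f))

theorem hosoya_eq_card : hosoya G = Nat.card {M // G.IsEdgeMatching M} :=
  (Nat.card_coe_set_eq _).symm

variable {G}

theorem IsEdgeMatching.eq_of_mem {M : Finset (Sym2 V)} (hM : G.IsEdgeMatching M) {e f : Sym2 V}
    {x : V} (he : e ∈ M) (hf : f ∈ M) (hxe : x ∈ e) (hxf : x ∈ f) : e = f :=
  hM.2.eq he hf fun h => h x ⟨hxe, hxf⟩

end SimpleGraph

namespace Caterpillar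

open Finset

variable {n : ℕ}

/-- `g i = some j` chooses the edge joining `⟨i, j⟩` to its parent: the spine edge from `i - 1`
if `j = 0`, a pendant edge otherwise; `g i = none` chooses nothing. -/
def IsAdmissible {a : Fin n → ℕ} (g : ∀ i, Option (Fin (a i))) : Prop :=
  ∀ i (j : Fin (a i)), g i = some j → (j : ℕ) = 0 →
    ∃ k : Fin n, (k : ℕ) + 1 = i ∧ g k = none

def LastFree {a : Fin n → ℕ} (g : ∀ i, Option (Fin (a i))) : Prop :=
  ∃ k : Fin n, (k : ℕ) + 1 = n ∧ g k = none

noncomputable def admissibleCount (a : Fin n → ℕ) : ℕ :=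
  Nat.card {g : ∀ i, Option (Fin (a i)) // IsAdmissible g}

noncomputable def lastFreeCount (a : Fin n → ℕ) : ℕ :=
  Nat.card {g : ∀ i, Option (Fin (a i)) // IsAdmissible g ∧ LastFree g}

theorem isAdmissible_snoc_iff {b : Fin (n + 1) → ℕ}
    (g : ∀ i : Fin n, Option (Fin (b i.castSucc))) (v : Option (Fin (b (Fin.last n)))) :
    IsAdmissible (Fin.snoc (α := fun i => Option (Fin (b i))) g v) ↔
      IsAdmissible g ∧ ∀ j ∈ v, (j : ℕ) = 0 → LastFree g := by
  have hlast (i : Fin n) : n + 1 ≠ i := by omega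
  simp only [IsAdmissible, LastFree, Fin.forall_fin_succ', Fin.exists_fin_succ', Fin.snoc_castSucc,
    Fin.snoc_last, Fin.val_castSucc, Fin.val_last, Option.mem_def, hlast, Nat.succ_ne_self,
    false_and, or_false]

theorem lastFree_snoc_iff {b : Fin (n + 1) → ℕ} (g : ∀ i : Fin n, Option (Fin (b i.castSucc)))
    (v : Option (Fin (b (Fin.last n)))) :
    LastFree (Fin.snoc (α := fun i => Option (Fin (b i))) g v) ↔ v = none := by
  have hlast (i : Fin n) : (i : ℕ) ≠ n := i.isLt.ne
  simp [LastFree, Fin.exists_fin_succ', hlast]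

theorem card_filter_option_fin {b : ℕ} (hb : 0 < b) (L : Prop) [Decidable L] :
    #{v : Option (Fin b) | ∀ j ∈ v, (j : ℕ) = 0 → L} = b + if L then 1 else 0 := by
  obtain ⟨b, rfl⟩ := Nat.exists_eq_succ_of_ne_zero hb.ne'
  rw [card_filter, Fintype.sum_option, Fin.sum_univ_succ]
  by_cases hL : L <;> simp [hL, Fin.succ_ne_zero] <;> omega

theorem admissibleCount_zero (a : Fin 0 → ℕ) : admissibleCount a = 1 := by
  simp [admissibleCount, IsAdmissible]

theorem lastFreeCount_zero (a : Fin 0 → ℕ) : lastFreeCount a = 0 := by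
  simp [lastFreeCount, LastFree]

theorem admissibleCount_succ {b : Fin (n + 1) → ℕ} (hb : 0 < b (Fin.last n)) :
    admissibleCount b =
      b (Fin.last n) * admissibleCount (fun i => b i.castSucc) +
        lastFreeCount (fun i => b i.castSucc) := by
  classical
  simp only [admissibleCount, lastFreeCount, Nat.card_eq_fintype_card, Fintype.card_subtype,
    card_filter]
  rw [← (Fin.snocEquiv _).sum_comp, Fintype.sum_prod_type_right]
  simp only [Fin.snocEquiv, Equiv.coe_fn_mk, isAdmissible_snoc_iff, ite_and]
  have inner (g : ∀ i : Fin n, Option (Fin (b i.castSucc))) :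
      (∑ v : Option (Fin (b (Fin.last n))),
        if IsAdmissible g then if ∀ j ∈ v, (j : ℕ) = 0 → LastFree g then 1 else 0 else 0) =
      if IsAdmissible g then b (Fin.last n) + if LastFree g then 1 else 0 else 0 := by
    by_cases hg : IsAdmissible g
    · simp only [hg, if_true]
      rw [← card_filter_option_fin hb, card_filter]
    · simp [hg]
  simp only [inner, mul_sum, ← sum_add_distrib]
  refine sum_congr rfl fun g _ => ?_
  split_ifs <;> simp

theorem lastFreeCount_succ (b : Fin (n + 1) → ℕ) :
    lastFreeCount b = admissibleCount (fun i => b i.castSucc) := by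
  classical
  simp only [admissibleCount, lastFreeCount, Nat.card_eq_fintype_card, Fintype.card_subtype,
    card_filter]
  rw [← (Fin.snocEquiv _).sum_comp, Fintype.sum_prod_type_right]
  simp only [Fin.snocEquiv, Equiv.coe_fn_mk, isAdmissible_snoc_iff, lastFree_snoc_iff]
  refine sum_congr rfl fun g _ => ?_
  rw [Fintype.sum_option]
  simp

theorem admissibleCount_eq_of_recurrence (a : Fin n → ℕ) (ha : ∀ i, 0 < a i) (p : ℕ → ℕ)
    (hp0 : p 0 = 0) (hp1 : p 1 = 1)
    (hprec : ∀ k (hk : k < n), p (k + 2) = a ⟨k, hk⟩ * p (k + 1) + p k) :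
    admissibleCount a = p (n + 1) ∧ lastFreeCount a = p n := by
  induction n with
  | zero =>
    exact ⟨(admissibleCount_zero a).trans hp1.symm, (lastFreeCount_zero a).trans hp0.symm⟩
  | succ n ih =>
    obtain ⟨hA, hL⟩ := ih (fun i => a i.castSucc) (fun _ => ha _) fun k hk => hprec k (by omega)
    rw [admissibleCount_succ (ha _), lastFreeCount_succ, hA, hL, hprec n n.lt_succ_self]
    exact ⟨rfl, rfl⟩

variable {a : Fin n → ℕ}

theorem sigma_ext_iff_val {x y : (i : Fin n) × Fin (a i)} :
    x = y ↔ (x.1 : ℕ) = y.1 ∧ (x.2 : ℕ) = y.2 := by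
  constructor
  · rintro rfl
    exact ⟨rfl, rfl⟩
  · obtain ⟨i, j⟩ := x
    obtain ⟨i', j'⟩ := y
    rintro ⟨hi, hj⟩
    obtain rfl : i = i' := Fin.ext hi
    obtain rfl : j = j' := Fin.ext hj
    rfl

variable (ha : ∀ i, 0 < a i)

def spine (i : Fin n) : (i : Fin n) × Fin (a i) := ⟨i, ⟨0, ha i⟩⟩

-- The root `⟨0, 0⟩` is its own parent, by truncated subtraction.
def parent (v : (i : Fin n) × Fin (a i)) : (i : Fin n) × Fin (a i) :=
  spine ha ⟨if (v.2 : ℕ) = 0 then (v.1 : ℕ) - 1 else v.1, by split_ifs <;> omega⟩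

def parentEdge (v : (i : Fin n) × Fin (a i)) : Sym2 ((i : Fin n) × Fin (a i)) :=
  s(parent ha v, v)

theorem parent_fst_val (v : (i : Fin n) × Fin (a i)) :
    ((parent ha v).1 : ℕ) = if (v.2 : ℕ) = 0 then (v.1 : ℕ) - 1 else v.1 :=
  rfl

theorem parent_snd_val (v : (i : Fin n) × Fin (a i)) : ((parent ha v).2 : ℕ) = 0 :=
  rfl

theorem parent_eq_self_iff {v : (i : Fin n) × Fin (a i)} :
    parent ha v = v ↔ (v.1 : ℕ) = 0 ∧ (v.2 : ℕ) = 0 := by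
  rw [sigma_ext_iff_val, parent_fst_val, parent_snd_val]
  split_ifs <;> omega

theorem caterpillar_adj_iff {x y : (i : Fin n) × Fin (a i)} :
    (caterpillar n a).Adj x y ↔ x ≠ y ∧ (x = parent ha y ∨ y = parent ha x) := by
  simp only [caterpillar, SimpleGraph.fromRel_adj, ne_eq, sigma_ext_iff_val, parent_fst_val,
    parent_snd_val, Fin.ext_iff]
  split_ifs <;> omega

theorem parentEdge_mem_edgeSet {v : (i : Fin n) × Fin (a i)} (hv : parent ha v ≠ v) :
    parentEdge ha v ∈ (caterpillar n a).edgeSet :=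
  (caterpillar_adj_iff ha).2 ⟨hv, Or.inl rfl⟩

theorem parent_ne_self_of_mem_edgeSet {v : (i : Fin n) × Fin (a i)}
    (hv : parentEdge ha v ∈ (caterpillar n a).edgeSet) : parent ha v ≠ v :=
  (caterpillar n a).ne_of_adj hv

theorem exists_parentEdge_eq {e : Sym2 ((i : Fin n) × Fin (a i))}
    (he : e ∈ (caterpillar n a).edgeSet) : ∃ v, parentEdge ha v = e := by
  induction e using Sym2.ind with
  | _ x y =>
    rcases ((caterpillar_adj_iff ha).1 he).2 with h | h
    · exact ⟨y, by rw [parentEdge, ← h]⟩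
    · exact ⟨x, by rw [parentEdge, ← h, Sym2.eq_swap]⟩

theorem eq_of_parentEdge_eq {v w : (i : Fin n) × Fin (a i)} (hv : parent ha v ≠ v)
    (h : parentEdge ha v = parentEdge ha w) : v = w := by
  rcases Sym2.eq_iff.1 h with ⟨-, h⟩ | ⟨h₁, h₂⟩
  · exact h
  · refine absurd ?_ hv
    simp only [sigma_ext_iff_val, parent_fst_val, parent_snd_val] at h₁ h₂ ⊢
    split_ifs at h₁ h₂ ⊢ <;> omega

theorem spine_mem_parentEdge (v : (i : Fin n) × Fin (a i)) : spine ha v.1 ∈ parentEdge ha v := by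
  rw [parentEdge, Sym2.mem_iff, sigma_ext_iff_val, sigma_ext_iff_val, parent_fst_val,
    parent_snd_val]
  dsimp only [spine]
  split_ifs <;> omega

def matchingOf (g : ∀ i, Option (Fin (a i))) : Finset (Sym2 ((i : Fin n) × Fin (a i))) :=
  ({v | g v.1 = some v.2} : Finset _).image (parentEdge ha)

variable {ha}

theorem mem_matchingOf {g : ∀ i, Option (Fin (a i))} {e : Sym2 ((i : Fin n) × Fin (a i))} :
    e ∈ matchingOf ha g ↔ ∃ v, g v.1 = some v.2 ∧ parentEdge ha v = e := by
  simp [matchingOf]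

theorem parent_ne_self_of_isAdmissible {g : ∀ i, Option (Fin (a i))} (hg : IsAdmissible g)
    {v : (i : Fin n) × Fin (a i)} (hv : g v.1 = some v.2) : parent ha v ≠ v := by
  intro h
  obtain ⟨hv₁, hv₂⟩ := (parent_eq_self_iff ha).1 h
  obtain ⟨k, hk, -⟩ := hg v.1 v.2 hv hv₂
  omega

-- Any vertex of a chosen edge determines the spine position that chose it.
theorem fst_val_eq_of_mem_parentEdge {g : ∀ i, Option (Fin (a i))} (hg : IsAdmissible g)
    {v x : (i : Fin n) × Fin (a i)} (hv : g v.1 = some v.2) (hx : x ∈ parentEdge ha v) :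
    (v.1 : ℕ) = if g x.1 = none then (x.1 : ℕ) + 1 else x.1 := by
  rcases Sym2.mem_iff.1 hx with rfl | rfl
  · by_cases h0 : (v.2 : ℕ) = 0
    · obtain ⟨k, hk, hk'⟩ := hg v.1 v.2 hv h0
      have : (parent ha v).1 = k := Fin.ext (by rw [parent_fst_val, if_pos h0]; omega)
      rw [this, if_pos hk']
      omega
    · have : (parent ha v).1 = v.1 := Fin.ext (by rw [parent_fst_val, if_neg h0])
      rw [this, hv, if_neg (Option.some_ne_none _)]
  · rw [hv, if_neg (Option.some_ne_none _)]

theorem isEdgeMatching_matchingOf {g : ∀ i, Option (Fin (a i))} (hg : IsAdmissible g) :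
    (caterpillar n a).IsEdgeMatching (matchingOf ha g) := by
  constructor
  · intro e he
    obtain ⟨v, hv, rfl⟩ := mem_matchingOf.1 he
    exact parentEdge_mem_edgeSet ha (parent_ne_self_of_isAdmissible hg hv)
  · rintro e he f hf hne x ⟨hxe, hxf⟩
    obtain ⟨⟨i, j⟩, hv, rfl⟩ := mem_matchingOf.1 he
    obtain ⟨⟨i', j'⟩, hw, rfl⟩ := mem_matchingOf.1 hf
    obtain rfl : i = i' := Fin.ext
      ((fst_val_eq_of_mem_parentEdge hg hv hxe).trans (fst_val_eq_of_mem_parentEdge hg hw hxf).symm)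
    obtain rfl : j = j' := Option.some_injective _ (hv.symm.trans hw)
    exact hne rfl

theorem parentEdge_mem_matchingOf_iff {g : ∀ i, Option (Fin (a i))}
    {v : (i : Fin n) × Fin (a i)} (hv : parent ha v ≠ v) :
    parentEdge ha v ∈ matchingOf ha g ↔ g v.1 = some v.2 := by
  rw [mem_matchingOf]
  constructor
  · rintro ⟨w, hw, h⟩
    rwa [eq_of_parentEdge_eq ha hv h.symm]
  · exact fun h => ⟨v, h, rfl⟩

theorem eq_of_matchingOf_eq {g g' : ∀ i, Option (Fin (a i))} (hg : IsAdmissible g)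
    (hg' : IsAdmissible g') (h : matchingOf ha g = matchingOf ha g') : g = g' := by
  funext i
  refine Option.ext fun j => ?_
  by_cases hv : parent ha ⟨i, j⟩ = ⟨i, j⟩
  · exact iff_of_false (fun h => parent_ne_self_of_isAdmissible hg h hv)
      (fun h => parent_ne_self_of_isAdmissible hg' h hv)
  · rw [← parentEdge_mem_matchingOf_iff hv, h, parentEdge_mem_matchingOf_iff hv]

variable (ha) in
theorem eq_of_parentEdge_mem {M : Finset (Sym2 ((i : Fin n) × Fin (a i)))}
    (hM : (caterpillar n a).IsEdgeMatching M) {v w x : (i : Fin n) × Fin (a i)}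
    (hv : parentEdge ha v ∈ M) (hw : parentEdge ha w ∈ M)
    (hxv : x ∈ parentEdge ha v) (hxw : x ∈ parentEdge ha w) : v = w :=
  eq_of_parentEdge_eq ha (parent_ne_self_of_mem_edgeSet ha (hM.1 hv)) (hM.eq_of_mem hv hw hxv hxw)

variable (ha) in
theorem exists_matchingOf_eq {M : Finset (Sym2 ((i : Fin n) × Fin (a i)))}
    (hM : (caterpillar n a).IsEdgeMatching M) :
    ∃ g, IsAdmissible g ∧ matchingOf ha g = M := by
  have choice (i : Fin n) :
      ∃ c : Option (Fin (a i)), ∀ j, c = some j ↔ parentEdge ha ⟨i, j⟩ ∈ M := by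
    by_cases h : ∃ j, parentEdge ha ⟨i, j⟩ ∈ M
    · obtain ⟨j, hj⟩ := h
      refine ⟨some j, fun j' => ⟨fun h => Option.some_injective _ h ▸ hj, fun hj' => ?_⟩⟩
      exact congrArg some (sigma_mk_injective (β := fun i => Fin (a i))
        (eq_of_parentEdge_mem ha hM hj hj' (spine_mem_parentEdge ha _)
          (spine_mem_parentEdge ha _)))
    · exact ⟨none, fun j => iff_of_false (Option.some_ne_none _).symm fun hj => h ⟨j, hj⟩⟩
  choose g hg using choice
  refine ⟨g, fun i j hij hj => ?_, ?_⟩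
  · have hi : (i : ℕ) ≠ 0 := fun hi =>
      parent_ne_self_of_mem_edgeSet ha (hM.1 ((hg i j).1 hij))
        ((parent_eq_self_iff ha).2 ⟨hi, hj⟩)
    let k : Fin n := ⟨(i : ℕ) - 1, by omega⟩
    have hk : parent ha ⟨i, j⟩ = spine ha k := sigma_ext_iff_val.2 ⟨if_pos hj, rfl⟩
    refine ⟨k, by simp only [k]; omega, Option.eq_none_iff_forall_ne_some.2 fun j' hj' => ?_⟩
    have hki := eq_of_parentEdge_mem ha hM ((hg k j').1 hj') ((hg i j).1 hij)
      (spine_mem_parentEdge ha _) (hk ▸ Sym2.mem_mk_left _ _)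
    have := congrArg (fun v => (v.1 : ℕ)) hki
    simp only [k] at this
    omega
  · ext e
    rw [mem_matchingOf]
    constructor
    · rintro ⟨v, hv, rfl⟩
      exact (hg _ _).1 hv
    · intro he
      obtain ⟨v, rfl⟩ := exists_parentEdge_eq ha (hM.1 he)
      exact ⟨v, (hg _ _).2 he, rfl⟩

theorem hosoya_caterpillar_eq_admissibleCount (ha : ∀ i, 0 < a i) :
    hosoya (caterpillar n a) = admissibleCount a := by
  rw [SimpleGraph.hosoya_eq_card, admissibleCount]
  refine (Nat.card_congr (Equiv.ofBijective
    (fun g => ⟨matchingOf ha g.1, isEdgeMatching_matchingOf g.2⟩) ⟨?_, ?_⟩)).symm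
  · rintro ⟨g, hg⟩ ⟨g', hg'⟩ h
    exact Subtype.ext (eq_of_matchingOf_eq hg hg' (congrArg Subtype.val h))
  · rintro ⟨M, hM⟩
    obtain ⟨g, hg, rfl⟩ := exists_matchingOf_eq ha hM
    exact ⟨⟨g, hg⟩, rfl⟩

end Caterpillar

theorem hosoya_caterpillar_general (n : ℕ) (a : Fin n → ℕ)
    (ha : ∀ i, 0 < a i) (p : ℕ → ℕ)
    -- `p (k + 2)` represents the continued fraction numerator `p_k`,
    -- so `p 0 = p_{-2} = 0` and `p 1 = p_{-1} = 1`.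
    (hp0 : p 0 = 0) (hp1 : p 1 = 1)
    (hprec : ∀ k (hk : k < n), p (k + 2) = a ⟨k, hk⟩ * p (k + 1) + p k) :
    hosoya (caterpillar n a) = p (n + 1) := by
  rw [Caterpillar.hosoya_caterpillar_eq_admissibleCount ha]
  exact (Caterpillar.admissibleCount_eq_of_recurrence a ha p hp0 hp1 hprec).1

theorem hosoya_caterpillar (n : ℕ) (hn : 1 ≤ n) (a : Fin n → ℕ)
    (ha : ∀ i, 0 < a i) (p : ℕ → ℕ)
    -- `p (k + 2)` represents the continued fraction numerator `p_k`,
    -- so `p 0 = p_{-2} = 0` and `p 1 = p_{-1} = 1`.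
    (hp0 : p 0 = 0) (hp1 : p 1 = 1)
    (hprec : ∀ k (hk : k < n), p (k + 2) = a ⟨k, hk⟩ * p (k + 1) + p k) :
    hosoya (caterpillar n a) = p (n + 1) :=
  hosoya_caterpillar_general n a ha p hp0 hp1 hprec
end
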